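/- Let ν ∈ N with ⟨ν, e_i⟩ > 0 for all 1 ≤ i ≤ d, and let 1 ≤ k ≤ d be such that φ_k(ν) < φ_{k+1}(ν) (this holds automatically when k = d since φ_{d+1} = +∞). If e_{r_1} + … + e_{r_k} and e_{r'_1} + … + e_{r'_k} are two elements of J_k, each written as a sum of k linearly independent vectors among e_1, …, e_{d+g} with at most one index exceeding d, and both attain the minimum ord_{J_k}(ν), then span_ℚ{e_{r_1}, …, e_{r_k}} = span_ℚ{e_{r'_1}, …, e_{r'_k}}. -/

import Mathlib

open scoped BigOperators Classical

namespace QO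

/-- The standard pairing `⟨ν, m⟩ = ∑ i, ν i * m i` on `ℚ^d`. -/
def pair (d : ℕ) (ν m : Fin d → ℚ) : ℚ := ∑ i, ν i * m i

/-- `E d lam i` is the `i`-th standard basis vector of `ℚ^d` for `1 ≤ i ≤ d`,
and equals the characteristic exponent `λ_{i-d}` for `d + 1 ≤ i` (1-based indexing). -/
def E (d : ℕ) (lam : ℕ → Fin d → ℚ) (i : ℕ) : Fin d → ℚ :=
  if 1 ≤ i ∧ i ≤ d then (fun j => if (j : ℕ) = i - 1 then 1 else 0) else lam (i - d)

/-- The lattice `M_j = ℤ^d + ℤλ_1 + ⋯ + ℤλ_j`, as an additive subgroup of `ℚ^d`. -/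
def Mlat (d : ℕ) (lam : ℕ → Fin d → ℚ) : ℕ → AddSubgroup (Fin d → ℚ)
  | 0 => AddSubgroup.closure (Set.range fun i : Fin d => (fun j => if j = i then (1 : ℚ) else 0))
  | (j + 1) => Mlat d lam j ⊔ AddSubgroup.closure {lam (j + 1)}

/-- The dual lattice `N` of `M = M_g`. -/
def Ndual (d g : ℕ) (lam : ℕ → Fin d → ℚ) : Set (Fin d → ℚ) :=
  { ν | ∀ m ∈ Mlat d lam g, ∃ z : ℤ, pair d ν m = (z : ℚ) }

/-- Admissible index sets for `J_k`: `k` indices in `{1, …, d+g}`, at most one of which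
exceeds `d`, whose associated vectors are linearly independent over `ℚ`. -/
def IdxOk (d g : ℕ) (lam : ℕ → Fin d → ℚ) (k : ℕ) (I : Finset ℕ) : Prop :=
  I.card = k ∧ I ⊆ Finset.Icc 1 (d + g) ∧ (I.filter fun i => d + 1 ≤ i).card ≤ 1 ∧
    LinearIndependent ℚ (fun i : {x // x ∈ I} => E d lam i.1)

/-- The set `J_k` of sums `e_{j_1} + ⋯ + e_{j_k}`. -/
def Jset (d g : ℕ) (lam : ℕ → Fin d → ℚ) (k : ℕ) : Set (Fin d → ℚ) :=
  { w | ∃ I : Finset ℕ, IdxOk d g lam k I ∧ w = ∑ i ∈ I, E d lam i }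

/-- The set `J_k`, as a finite set. -/
noncomputable def Jfin (d g : ℕ) (lam : ℕ → Fin d → ℚ) (k : ℕ) : Finset (Fin d → ℚ) :=
  ((Finset.Icc 1 (d + g)).powerset.filter fun I => IdxOk d g lam k I).image
    fun I => ∑ i ∈ I, E d lam i

/-- The support function `ord_{J_k}(ν) = min_{w ∈ J_k} ⟨ν, w⟩`. -/
noncomputable def ordJ (d g : ℕ) (lam : ℕ → Fin d → ℚ) (k : ℕ) (ν : Fin d → ℚ) : ℚ :=
  if h : (Jfin d g lam k).Nonempty then ((Jfin d g lam k).image (pair d ν)).min' (h.image _)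
  else 0

/-- `φ_k(ν) = ord_{J_k}(ν) - ord_{J_{k-1}}(ν)` (note `ord_{J_0} = 0`, hence also `φ_0 = 0`). -/
noncomputable def phiJ (d g : ℕ) (lam : ℕ → Fin d → ℚ) (k : ℕ) (ν : Fin d → ℚ) : ℚ :=
  ordJ d g lam k ν - ordJ d g lam (k - 1) ν

/-- The sort key of the total order `≤_ν` on the indices `1, …, d+g`: sort by the value
`⟨ν, ·⟩`, breaking ties (in particular ties between an `e_i` with `i ≤ d` and a `λ_j`)
by the index, so that `e_i` is placed first. -/
noncomputable def keyIdx (d : ℕ) (lam : ℕ → Fin d → ℚ) (ν : Fin d → ℚ) (i : ℕ) : ℚ ×ₗ ℕ :=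
  toLex (pair d ν (E d lam i), i)

/-- The `≤_ν`-least element of a finite set of indices. -/
noncomputable def leastIdx (d : ℕ) (lam : ℕ → Fin d → ℚ) (ν : Fin d → ℚ) (S : Finset ℕ) : ℕ :=
  if h : S.Nonempty then (ofLex ((S.image (keyIdx d lam ν)).min' (h.image _))).2 else 0

/-- The `≤_ν`-greatest element of a finite set of indices. -/
noncomputable def greatestIdx (d : ℕ) (lam : ℕ → Fin d → ℚ) (ν : Fin d → ℚ)
    (S : Finset ℕ) : ℕ :=
  if h : S.Nonempty then (ofLex ((S.image (keyIdx d lam ν)).max' (h.image _))).2 else 0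

/-- The `ℚ`-span of the vectors indexed by `I`. -/
def spanOf (d : ℕ) (lam : ℕ → Fin d → ℚ) (I : Finset ℕ) : Submodule ℚ (Fin d → ℚ) :=
  Submodule.span ℚ ((fun i => E d lam i) '' (I : Set ℕ))

/-- `n(k)`: the index `n` such that `λ_n` is a summand of `w_k`, and `0` if there is none. -/
noncomputable def nVal (d : ℕ) (I : Finset ℕ) : ℕ :=
  if h : (I.filter fun i => d + 1 ≤ i).Nonempty then (I.filter fun i => d + 1 ≤ i).min' h - d
  else 0

/-- `t(k)`: the least `1 ≤ j ≤ g` with `λ_j ∉ ℓ_k(ν)`, and `g + 1` if there is none. -/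
noncomputable def tVal (d g : ℕ) (lam : ℕ → Fin d → ℚ) (I : Finset ℕ) : ℕ :=
  if h : ((Finset.Icc 1 g).filter fun j => lam j ∉ spanOf d lam I).Nonempty then
    ((Finset.Icc 1 g).filter fun j => lam j ∉ spanOf d lam I).min' h
  else g + 1

/-- `m(k)`: the index `m` with `({e_1, …, e_d} ∩ ℓ_k(ν)) ∖ {summands of w_k} = {e_m}`,
and `0` if this set is empty. -/
noncomputable def mVal (d : ℕ) (lam : ℕ → Fin d → ℚ) (I : Finset ℕ) : ℕ :=
  if h : (((Finset.Icc 1 d).filter fun i => E d lam i ∈ spanOf d lam I) \ I).Nonempty then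
    (((Finset.Icc 1 d).filter fun i => E d lam i ∈ spanOf d lam I) \ I).min' h
  else 0

/-- `i(k)`: the `≤_ν`-least index `1 ≤ i ≤ d + g` with `w_k + e_i ∈ J_{k+1}`. -/
noncomputable def iVal (d g : ℕ) (lam : ℕ → Fin d → ℚ) (ν : Fin d → ℚ) (k : ℕ)
    (I : Finset ℕ) : ℕ :=
  leastIdx d lam ν ((Finset.Icc 1 (d + g)).filter fun i => IdxOk d g lam (k + 1) (insert i I))

/-- One step of the algorithm, from the summands of `w_k` to the summands of `w_{k+1}`:
`a_{k+1} = w_k + e_{i(k)}` and `b_{k+1} = w_k - λ_{n(k)} + λ_{t(k)} + e_{m(k)}`; the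
candidate `b_{k+1}` is discarded when `m(k) = 0` or `t(k) = g + 1`, and otherwise
`w_{k+1} = a_{k+1}` exactly when `⟨ν, a_{k+1}⟩ ≤ ⟨ν, b_{k+1}⟩`. -/
noncomputable def step (d g : ℕ) (lam : ℕ → Fin d → ℚ) (ν : Fin d → ℚ) (k : ℕ)
    (I : Finset ℕ) : Finset ℕ :=
  let a : Finset ℕ := insert (iVal d g lam ν k I) I
  let b : Finset ℕ :=
    insert (mVal d lam I) (insert (d + tVal d g lam I)
      (if nVal d I = 0 then I else I.erase (d + nVal d I)))
  if mVal d lam I = 0 ∨ tVal d g lam I = g + 1 then a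
  else if pair d ν (∑ i ∈ a, E d lam i) ≤ pair d ν (∑ i ∈ b, E d lam i) then a else b

/-- The index sets `W ν k` of summands of the algorithm's vectors `w_k`; the vector `w_1`
is the `≤_ν`-least element of `{e_1, …, e_d, λ_1}`. -/
noncomputable def W (d g : ℕ) (lam : ℕ → Fin d → ℚ) (ν : Fin d → ℚ) : ℕ → Finset ℕ
  | 0 => ∅
  | 1 => {leastIdx d lam ν (insert (d + 1) (Finset.Icc 1 d))}
  | (k + 2) => step d g lam ν (k + 1) (W d g lam ν (k + 1))

/-- The algorithm's vector `w_k`. -/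
noncomputable def wVec (d g : ℕ) (lam : ℕ → Fin d → ℚ) (ν : Fin d → ℚ) (k : ℕ) :
    Fin d → ℚ :=
  ∑ i ∈ W d g lam ν k, E d lam i

/-- `ℓ_k(ν)`: the `ℚ`-span of the summands of `w_k`. -/
noncomputable def ellK (d g : ℕ) (lam : ℕ → Fin d → ℚ) (ν : Fin d → ℚ) (k : ℕ) :
    Submodule ℚ (Fin d → ℚ) :=
  spanOf d lam (W d g lam ν k)

/-- `ℓ_ν^s = span_ℚ{e_j : 1 ≤ j < d + t(k), ⟨ν, e_j⟩ ≤ s}`, where `k` is the index with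
`φ_k(ν) ≤ s < φ_{k+1}(ν)`. -/
noncomputable def ellS (d g : ℕ) (lam : ℕ → Fin d → ℚ) (ν : Fin d → ℚ) (s : ℚ) (k : ℕ) :
    Submodule ℚ (Fin d → ℚ) :=
  Submodule.span ℚ ((fun i => E d lam i) ''
    { i : ℕ | 1 ≤ i ∧ i < d + tVal d g lam (W d g lam ν k) ∧ pair d ν (E d lam i) ≤ s })

/-- `p(k)` (with the convention `λ_0 = 0`). -/
noncomputable def pVal (d g : ℕ) (lam : ℕ → Fin d → ℚ) (ν : Fin d → ℚ) (s : ℚ)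
    (k : ℕ) : ℕ :=
  if nVal d (W d g lam ν k) = 0 then
    if h : ((Finset.Icc 0 g).filter fun j =>
        pair d ν (if j = 0 then (0 : Fin d → ℚ) else lam j) ≤ s).Nonempty then
      ((Finset.Icc 0 g).filter fun j =>
        pair d ν (if j = 0 then (0 : Fin d → ℚ) else lam j) ≤ s).max' h
    else 0
  else
    (insert (nVal d (W d g lam ν k))
      ((Finset.Ioo (nVal d (W d g lam ν k)) (tVal d g lam (W d g lam ν k))).filter fun j =>
        mVal d lam (W d g lam ν k) ≠ 0 ∧
          pair d ν (E d lam (mVal d lam (W d g lam ν k)) - lam (nVal d (W d g lam ν k)) + lam j)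
            ≤ s)).max' (Finset.insert_nonempty _ _)

/-- `q_η`: the index of the `≤_ν`-greatest element of `{e_1, …, e_d} ∩ ℓ(η)`, where
`ℓ(η) = span_ℚ{e_i : η_i ≠ 0}`. -/
noncomputable def qIdx (d : ℕ) (lam : ℕ → Fin d → ℚ) (ν η : Fin d → ℚ) : ℕ :=
  greatestIdx d lam ν ((Finset.Icc 1 d).filter fun i => pair d η (E d lam i) ≠ 0)

/-!
If the spans differ, some summand `e_x` of `I'` lies outside the span of `I`. When `x ≤ d`,
`I ∪ {x}` is admissible for `J_{k+1}`, so `ord_{J_{k+1}}(ν) ≤ ord_{J_k}(ν) + ⟨ν, e_x⟩`, while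
dropping the `ν`-largest summand of `I'` gives `ord_{J_{k-1}}(ν) ≤ ord_{J_k}(ν) - ⟨ν, e_x⟩`;
together `φ_{k+1}(ν) ≤ φ_k(ν)`, which is excluded. Hence every summand escaping the other span
is a `λ_j`. Each side contains at most one `λ_j`, so the remaining summands are standard basis
vectors lying in both spans. If these standard parts differ, `k` of them span both subspaces;
if they agree, the two `λ`'s have the same `ν`-value and therefore coincide, because the `λ_j`
increase coordinatewise and `ν` is positive.
-/

theorem eq_of_le_of_dotProduct_eq {ι R : Type*} [Fintype ι] [Field R] [LinearOrder R]
    [IsStrictOrderedRing R] {ν u v : ι → R} (hν : ∀ i, 0 < ν i) (huv : u ≤ v)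
    (h : ν ⬝ᵥ u = ν ⬝ᵥ v) : u = v := by
  have hsum : ∑ i, ν i * (v i - u i) = 0 := by
    rw [← sub_eq_zero.2 h.symm, ← dotProduct_sub]; rfl
  have hterm := (Finset.sum_eq_zero_iff_of_nonneg fun i _ =>
    mul_nonneg (hν i).le (sub_nonneg.2 (huv i))).1 hsum
  funext i
  have := hterm i (Finset.mem_univ i)
  rw [mul_eq_zero, sub_eq_zero] at this
  exact this.resolve_left (hν i).ne' |>.symm

section SpanOfMinimizers

variable {d g : ℕ} {lam : ℕ → Fin d → ℚ} {ν : Fin d → ℚ} {k : ℕ} {I I' : Finset ℕ}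

theorem pair_eq_dotProduct (ν m : Fin d → ℚ) : pair d ν m = ν ⬝ᵥ m := rfl

theorem E_mem_spanOf {i : ℕ} (hi : i ∈ I) : E d lam i ∈ spanOf d lam I :=
  Submodule.subset_span ⟨i, hi, rfl⟩

theorem E_succ (c : Fin d) : E d lam (c + 1) = Pi.single c 1 := by
  rw [E, if_pos ⟨by omega, c.2⟩]
  funext j
  simp [Pi.single_apply, Fin.ext_iff]

theorem E_of_lt {i : ℕ} (hi : d < i) : E d lam i = lam (i - d) := by
  rw [E, if_neg (by omega)]

theorem lam_le_lam (hmono : ∀ j, 1 ≤ j → j < g → ∀ i, lam j i ≤ lam (j + 1) i)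
    {a b : ℕ} (ha : 1 ≤ a) (hab : a ≤ b) (hb : b ≤ g) : lam a ≤ lam b := by
  induction b, hab using Nat.le_induction with
  | base => exact le_rfl
  | succ n hn ih => exact (ih (by omega)).trans (hmono n (by omega) (by omega))

theorem E_eq_of_pair_eq (hmono : ∀ j, 1 ≤ j → j < g → ∀ i, lam j i ≤ lam (j + 1) i)
    (hν : ∀ c, 0 < ν c) {a b : ℕ} (ha : d < a) (hag : a ≤ d + g) (hb : d < b)
    (hbg : b ≤ d + g) (h : pair d ν (E d lam a) = pair d ν (E d lam b)) :
    E d lam a = E d lam b := by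
  rw [pair_eq_dotProduct, pair_eq_dotProduct] at h
  rw [E_of_lt ha, E_of_lt hb] at h ⊢
  rcases le_total a b with hab | hba
  · exact eq_of_le_of_dotProduct_eq hν (lam_le_lam hmono (by omega) (by omega) (by omega)) h
  · exact (eq_of_le_of_dotProduct_eq hν
      (lam_le_lam hmono (by omega) (by omega) (by omega)) h.symm).symm

theorem linearIndepOn_E_of_subset_Icc {T : Finset ℕ} (hT : T ⊆ Finset.Icc 1 d) :
    LinearIndepOn ℚ (E d lam) (T : Set ℕ) := by
  have hmem : ∀ i : (T : Set ℕ), 1 ≤ i.1 ∧ i.1 ≤ d := fun i => Finset.mem_Icc.1 (hT i.2)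
  let idx : ↥(T : Set ℕ) → Fin d := fun i => ⟨i.1 - 1, by have := hmem i; omega⟩
  have hE : (fun i : (T : Set ℕ) => E d lam i) = Pi.basisFun ℚ (Fin d) ∘ idx := by
    funext i
    rw [Function.comp_apply, Pi.basisFun_apply, ← E_succ]
    congr 1
    have := hmem i
    simp only [idx]
    omega
  change LinearIndependent ℚ (fun i : (T : Set ℕ) => E d lam i)
  rw [hE]
  refine (Pi.basisFun ℚ (Fin d)).linearIndependent.comp idx fun i j hij => Subtype.ext ?_
  have := congrArg Fin.val hij
  have := hmem i
  have := hmem j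
  simp only [idx] at *
  omega

theorem finrank_spanOf {T : Finset ℕ} (hT : LinearIndepOn ℚ (E d lam) (T : Set ℕ)) :
    Module.finrank ℚ (spanOf d lam T) = T.card := by
  unfold spanOf
  rw [Set.image_eq_range, finrank_span_eq_card hT]
  simp

namespace IdxOk

theorem linearIndepOn (hI : IdxOk d g lam k I) : LinearIndepOn ℚ (E d lam) (I : Set ℕ) :=
  hI.2.2.2

theorem mem_Icc (hI : IdxOk d g lam k I) {i : ℕ} (hi : i ∈ I) : i ∈ Finset.Icc 1 (d + g) :=
  hI.2.1 hi

theorem finrank_spanOf (hI : IdxOk d g lam k I) :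
    Module.finrank ℚ (spanOf d lam I) = k := by
  rw [QO.finrank_spanOf hI.linearIndepOn, hI.1]

theorem spanOf_eq_top (hI : IdxOk d g lam d I) : spanOf d lam I = ⊤ :=
  Submodule.eq_top_of_finrank_eq (by rw [hI.finrank_spanOf, Module.finrank_fin_fun])

theorem eq_of_lt_of_lt (hI : IdxOk d g lam k I) {a b : ℕ} (ha : a ∈ I) (hb : b ∈ I)
    (had : d < a) (hbd : d < b) : a = b :=
  Finset.card_le_one.1 hI.2.2.1 a (Finset.mem_filter.2 ⟨ha, had⟩)
    b (Finset.mem_filter.2 ⟨hb, hbd⟩)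

theorem erase (hI : IdxOk d g lam k I) {y : ℕ} (hy : y ∈ I) :
    IdxOk d g lam (k - 1) (I.erase y) :=
  ⟨by rw [Finset.card_erase_of_mem hy, hI.1], (Finset.erase_subset _ _).trans hI.2.1,
    (Finset.card_le_card (Finset.filter_subset_filter _ (Finset.erase_subset _ _))).trans
      hI.2.2.1,
    hI.linearIndepOn.mono (Finset.coe_subset.2 (Finset.erase_subset _ _))⟩

theorem insert_of_notMem_spanOf (hI : IdxOk d g lam k I) {x : ℕ} (hx : x ∈ Finset.Icc 1 d)
    (hxs : E d lam x ∉ spanOf d lam I) : IdxOk d g lam (k + 1) (insert x I) := by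
  have hxI : x ∉ I := fun h => hxs (E_mem_spanOf h)
  have hxd := (Finset.mem_Icc.1 hx).2
  refine ⟨by rw [Finset.card_insert_of_notMem hxI, hI.1],
    Finset.insert_subset (Finset.mem_Icc.2 ⟨(Finset.mem_Icc.1 hx).1, by omega⟩) hI.2.1,
    ?_, ?_⟩
  · rw [Finset.filter_insert, if_neg (by omega)]
    exact hI.2.2.1
  · show LinearIndepOn ℚ (E d lam) ↑(insert x I)
    rw [Finset.coe_insert]
    exact hI.linearIndepOn.insert hxs

theorem ordJ_le (hI : IdxOk d g lam k I) :
    ordJ d g lam k ν ≤ pair d ν (∑ i ∈ I, E d lam i) := by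
  have hmem : (∑ i ∈ I, E d lam i) ∈ Jfin d g lam k :=
    Finset.mem_image_of_mem _ (Finset.mem_filter.2 ⟨Finset.mem_powerset.2 hI.2.1, hI⟩)
  rw [ordJ, dif_pos ⟨_, hmem⟩]
  exact Finset.min'_le _ _ (Finset.mem_image_of_mem _ hmem)

end IdxOk

theorem exists_notMem_spanOf_of_ne (hI : IdxOk d g lam k I) (hI' : IdxOk d g lam k I')
    (hne : spanOf d lam I ≠ spanOf d lam I') : ∃ x ∈ I', E d lam x ∉ spanOf d lam I := by
  by_contra! h
  refine hne (Submodule.eq_of_le_of_finrank_eq ?_ (by rw [hI.finrank_spanOf,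
    hI'.finrank_spanOf])).symm
  rw [spanOf, Submodule.span_le]
  rintro _ ⟨x, hx, rfl⟩
  exact h x hx

theorem phiJ_succ_le_of_idxOk_insert (hI : IdxOk d g lam k I) (hI' : IdxOk d g lam k I')
    (hmin : pair d ν (∑ i ∈ I, E d lam i) = ordJ d g lam k ν)
    (hmin' : pair d ν (∑ i ∈ I', E d lam i) = ordJ d g lam k ν)
    {x : ℕ} (hx : x ∈ I') (hins : IdxOk d g lam (k + 1) (insert x I)) :
    phiJ d g lam (k + 1) ν ≤ phiJ d g lam k ν := by
  have hxI : x ∉ I := fun h => by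
    have := hins.1; rw [Finset.insert_eq_of_mem h, hI.1] at this; omega
  obtain ⟨y, hy, hymax⟩ := Finset.exists_max_image I' (fun i => pair d ν (E d lam i)) ⟨x, hx⟩
  have hup : ordJ d g lam (k + 1) ν ≤ pair d ν (E d lam x) + ordJ d g lam k ν := by
    have := hins.ordJ_le (ν := ν)
    rwa [Finset.sum_insert hxI, pair_eq_dotProduct, dotProduct_add, ← pair_eq_dotProduct,
      ← pair_eq_dotProduct, hmin] at this
  have hdown : ordJ d g lam (k - 1) ν ≤ ordJ d g lam k ν - pair d ν (E d lam y) := by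
    have := (hI'.erase hy).ordJ_le (ν := ν)
    rwa [Finset.sum_erase_eq_sub hy, pair_eq_dotProduct, dotProduct_sub, ← pair_eq_dotProduct,
      ← pair_eq_dotProduct, hmin'] at this
  have := hymax x hx
  simp only [phiJ, Nat.add_sub_cancel]
  linarith

theorem lt_of_mem_of_notMem_spanOf (hphi : phiJ d g lam k ν < phiJ d g lam (k + 1) ν)
    (hI : IdxOk d g lam k I) (hI' : IdxOk d g lam k I')
    (hmin : pair d ν (∑ i ∈ I, E d lam i) = ordJ d g lam k ν)
    (hmin' : pair d ν (∑ i ∈ I', E d lam i) = ordJ d g lam k ν)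
    {x : ℕ} (hx : x ∈ I') (hxs : E d lam x ∉ spanOf d lam I) : d < x := by
  by_contra! hxd
  have hx1 := (Finset.mem_Icc.1 (hI'.mem_Icc hx)).1
  exact (phiJ_succ_le_of_idxOk_insert hI hI' hmin hmin' hx
    (hI.insert_of_notMem_spanOf (Finset.mem_Icc.2 ⟨hx1, hxd⟩) hxs)).not_gt hphi

theorem forall_mem_erase_mem_Icc_and_mem_spanOf (hI' : IdxOk d g lam k I')
    (hnew : ∀ x ∈ I', E d lam x ∉ spanOf d lam I → d < x) {x : ℕ} (hx : x ∈ I')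
    (hxd : d < x) : ∀ z ∈ I'.erase x, z ∈ Finset.Icc 1 d ∧ E d lam z ∈ spanOf d lam I := by
  intro z hz
  obtain ⟨hzx, hzI'⟩ := Finset.mem_erase.1 hz
  have hzd : z ≤ d := by
    by_contra! h
    exact hzx (hI'.eq_of_lt_of_lt hzI' hx h hxd)
  refine ⟨Finset.mem_Icc.2 ⟨(Finset.mem_Icc.1 (hI'.mem_Icc hzI')).1, hzd⟩, ?_⟩
  by_contra h
  exact absurd (hnew z hzI' h) (not_lt.2 hzd)

theorem spanOf_eq_of_forall_mem_spanOf (hI : IdxOk d g lam k I) (hI' : IdxOk d g lam k I')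
    {T : Finset ℕ} (hT : T ⊆ Finset.Icc 1 d) (hcard : T.card = k)
    (hTI : ∀ i ∈ T, E d lam i ∈ spanOf d lam I) (hTI' : ∀ i ∈ T, E d lam i ∈ spanOf d lam I') :
    spanOf d lam I = spanOf d lam I' := by
  have hspanT : ∀ J, IdxOk d g lam k J → (∀ i ∈ T, E d lam i ∈ spanOf d lam J) →
      spanOf d lam T = spanOf d lam J := by
    intro J hJ hTJ
    refine Submodule.eq_of_le_of_finrank_eq ?_
      (by rw [finrank_spanOf (linearIndepOn_E_of_subset_Icc hT), hJ.finrank_spanOf, hcard])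
    rw [spanOf, Submodule.span_le]
    rintro _ ⟨i, hi, rfl⟩
    exact hTJ i hi
  exact (hspanT I hI hTI).symm.trans (hspanT I' hI' hTI')

theorem spanOf_eq_of_notMem_spanOf_imp_lt
    (hmono : ∀ j, 1 ≤ j → j < g → ∀ i, lam j i ≤ lam (j + 1) i) (hν : ∀ c, 0 < ν c)
    (hI : IdxOk d g lam k I) (hI' : IdxOk d g lam k I')
    (hpair : pair d ν (∑ i ∈ I, E d lam i) = pair d ν (∑ i ∈ I', E d lam i))
    (hnew : ∀ x ∈ I', E d lam x ∉ spanOf d lam I → d < x)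
    (hnew' : ∀ x ∈ I, E d lam x ∉ spanOf d lam I' → d < x) :
    spanOf d lam I = spanOf d lam I' := by
  by_contra hne
  obtain ⟨x, hx, hxs⟩ := exists_notMem_spanOf_of_ne hI hI' hne
  obtain ⟨y, hy, hys⟩ := exists_notMem_spanOf_of_ne hI' hI (Ne.symm hne)
  have hA' := forall_mem_erase_mem_Icc_and_mem_spanOf hI' hnew hx (hnew x hx hxs)
  have hA := forall_mem_erase_mem_Icc_and_mem_spanOf hI hnew' hy (hnew' y hy hys)
  by_cases hsub : I'.erase x ⊆ I.erase y
  · have hAA' : I'.erase x = I.erase y := Finset.eq_of_subset_of_card_le hsub (by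
      rw [Finset.card_erase_of_mem hx, Finset.card_erase_of_mem hy, hI.1, hI'.1])
    have hEq : pair d ν (E d lam x) = pair d ν (E d lam y) := by
      simp only [pair_eq_dotProduct, ← Finset.add_sum_erase I _ hy,
        ← Finset.add_sum_erase I' _ hx, dotProduct_add, hAA'] at hpair
      rw [pair_eq_dotProduct, pair_eq_dotProduct]
      linarith
    have hxg := Finset.mem_Icc.1 (hI'.mem_Icc hx)
    have hyg := Finset.mem_Icc.1 (hI.mem_Icc hy)
    rw [E_eq_of_pair_eq hmono hν (hnew x hx hxs) hxg.2 (hnew' y hy hys) hyg.2 hEq] at hxs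
    exact hxs (E_mem_spanOf hy)
  · obtain ⟨z, hzA', hzA⟩ := Finset.not_subset.1 hsub
    have hcard : (insert z (I.erase y)).card = k := by
      rw [Finset.card_insert_of_notMem hzA, Finset.card_erase_of_mem hy, hI.1]
      have := hI.1 ▸ Finset.card_pos.2 ⟨y, hy⟩; omega
    refine hne (spanOf_eq_of_forall_mem_spanOf hI hI'
      (Finset.insert_subset (hA' z hzA').1 fun i hi => (hA i hi).1) hcard ?_ ?_)
    · exact (Finset.forall_mem_insert _ _ _).2
        ⟨(hA' z hzA').2, fun i hi => E_mem_spanOf (Finset.mem_of_mem_erase hi)⟩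
    · exact (Finset.forall_mem_insert _ _ _).2
        ⟨E_mem_spanOf (Finset.mem_of_mem_erase hzA'), fun i hi => (hA i hi).2⟩

end SpanOfMinimizers

theorem statement5_general (d g : ℕ) (lam : ℕ → Fin d → ℚ)
    (hmono : ∀ j, 1 ≤ j → j < g → ∀ i, lam j i ≤ lam (j + 1) i)
    (ν : Fin d → ℚ)
    (hpos : ∀ i, 1 ≤ i → i ≤ d → 0 < pair d ν (E d lam i))
    (k : ℕ) (hkd : k ≤ d)
    (hphi : k < d → phiJ d g lam k ν < phiJ d g lam (k + 1) ν)
    (I I' : Finset ℕ) (hI : IdxOk d g lam k I) (hI' : IdxOk d g lam k I')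
    (hmin : pair d ν (∑ i ∈ I, E d lam i) = ordJ d g lam k ν)
    (hmin' : pair d ν (∑ i ∈ I', E d lam i) = ordJ d g lam k ν) :
    spanOf d lam I = spanOf d lam I' := by
  have hν : ∀ c : Fin d, 0 < ν c := fun c => by
    simpa [pair_eq_dotProduct, E_succ] using hpos (c + 1) (by omega) c.2
  rcases hkd.eq_or_lt with rfl | hkd
  · rw [hI.spanOf_eq_top, hI'.spanOf_eq_top]
  exact spanOf_eq_of_notMem_spanOf_imp_lt hmono hν hI hI' (hmin.trans hmin'.symm)
    (fun _ hx hxs => lt_of_mem_of_notMem_spanOf (hphi hkd) hI hI' hmin hmin' hx hxs)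
    (fun _ hx hxs => lt_of_mem_of_notMem_spanOf (hphi hkd) hI' hI hmin' hmin hx hxs)

/-- Suppose `φ_k(ν) < φ_{k+1}(ν)` (which holds automatically when `k = d`, since
`φ_{d+1} = +∞`). If two elements of `J_k`, each written as a sum of `k` linearly
independent vectors among `e_1, …, e_{d+g}` with at most one index exceeding `d`, both
attain the minimum `ord_{J_k}(ν)`, then their summands span the same subspace. -/
theorem statement5 (d g : ℕ) (lam : ℕ → Fin d → ℚ) (hd : 1 ≤ d) (hg : 1 ≤ g)
    (hnn : ∀ j, 1 ≤ j → j ≤ g → ∀ i, 0 ≤ lam j i)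
    (hmono : ∀ j, 1 ≤ j → j < g → ∀ i, lam j i ≤ lam (j + 1) i)
    (hnotin : ∀ j, 1 ≤ j → j ≤ g → lam j ∉ Mlat d lam (j - 1))
    (ν : Fin d → ℚ) (hν : ν ∈ Ndual d g lam)
    (hpos : ∀ i, 1 ≤ i → i ≤ d → 0 < pair d ν (E d lam i))
    (k : ℕ) (hk1 : 1 ≤ k) (hkd : k ≤ d)
    (hphi : k < d → phiJ d g lam k ν < phiJ d g lam (k + 1) ν)
    (I I' : Finset ℕ) (hI : IdxOk d g lam k I) (hI' : IdxOk d g lam k I')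
    (hmin : pair d ν (∑ i ∈ I, E d lam i) = ordJ d g lam k ν)
    (hmin' : pair d ν (∑ i ∈ I', E d lam i) = ordJ d g lam k ν) :
    spanOf d lam I = spanOf d lam I' :=
  statement5_general d g lam hmono ν hpos k hkd hphi I I' hI hI' hmin hmin'

end QO
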